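/- arXiv:2002.03994 — 15 statements merged into one kernel-verified Lean document; each statement's English description precedes it below -/
import Mathlib

section
/- For every nonnegative integer n and every prime p, the derangement numbers satisfy D_{n+p} ≡ -D_n (mod p). -/
open Finset

/-- The derangement numbers `D_n = ∑_{k=0}^n C(n,k)·k!·(-1)^{n-k}`. -/
def derNum (n : ℕ) : ℤ :=
  ∑ k ∈ Finset.range (n + 1), (n.choose k * k.factorial : ℤ) * (-1) ^ (n - k)

lemma chooseAddP (p n k : ℕ) (hp : p.Prime) (hk : k < p) :
    ((n + p).choose k : ZMod p) = (n.choose k : ZMod p) := by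
  rw [add_comm, Nat.add_choose_eq]
  push_cast
  rw [Finset.sum_eq_single ((0, k) : ℕ × ℕ)]
  · simp
  · rintro ⟨i, j⟩ hmem hne
    have hij : i + j = k := Finset.HasAntidiagonal.mem_antidiagonal.mp hmem
    have hi0 : i ≠ 0 := by rintro rfl; simp_all
    have h0 : (p.choose i : ZMod p) = 0 :=
      (ZMod.natCast_eq_zero_iff _ _).mpr
        (hp.dvd_choose_self hi0 (lt_of_le_of_lt (le_of_add_le_left hij.le) hk))
    rw [h0, zero_mul]
  · intro h
    exact absurd (Finset.HasAntidiagonal.mem_antidiagonal.mpr (by simp)) h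

theorem derNum_add_prime (n : ℕ) (p : ℕ) (hp : p.Prime) :
    derNum (n + p) ≡ -derNum n [ZMOD p] := by
  haveI : Fact p.Prime := ⟨hp⟩
  rw [← ZMod.intCast_eq_intCast_iff]
  have hcast : ∀ m : ℕ, ((derNum m : ℤ) : ZMod p)
      = ∑ k ∈ Finset.range (m + 1),
        (m.choose k : ZMod p) * (k.factorial : ZMod p) * (-1) ^ (m - k) := by
    intro m
    rw [derNum]
    push_cast
    rfl
  rw [hcast, Int.cast_neg, hcast]
  -- kill terms with k ≥ p on both sides, then compare on range p
  have hfac : ∀ k : ℕ, p ≤ k → ((k.factorial : ZMod p)) = 0 := fun k hk =>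
    (ZMod.natCast_eq_zero_iff _ _).mpr (Nat.dvd_factorial hp.pos hk)
  have hL : ∑ k ∈ Finset.range (n + p + 1),
      ((n + p).choose k : ZMod p) * (k.factorial : ZMod p) * (-1) ^ (n + p - k)
      = ∑ k ∈ Finset.range p,
      ((n + p).choose k : ZMod p) * (k.factorial : ZMod p) * (-1) ^ (n + p - k) := by
    refine (Finset.sum_subset (by intro x hx; simp at hx ⊢; omega) ?_).symm
    intro k _ hk
    simp only [Finset.mem_range, not_lt] at hk
    rw [hfac k hk, mul_zero, zero_mul]
  have hR : ∑ k ∈ Finset.range (n + 1),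
      (n.choose k : ZMod p) * (k.factorial : ZMod p) * (-1) ^ (n - k)
      = ∑ k ∈ Finset.range p,
      (n.choose k : ZMod p) * (k.factorial : ZMod p) * (-1) ^ (n - k) := by
    rcases le_or_gt (n + 1) p with h | h
    · refine Finset.sum_subset (by intro x hx; simp at hx ⊢; omega) ?_
      intro k hk hk'
      simp only [Finset.mem_range, not_lt] at hk'
      have : n.choose k = 0 := Nat.choose_eq_zero_of_lt (by omega)
      simp [this]
    · refine (Finset.sum_subset (by intro x hx; simp at hx ⊢; omega) ?_).symm
      intro k _ hk
      simp only [Finset.mem_range, not_lt] at hk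
      rw [hfac k hk, mul_zero, zero_mul]
  rw [hL, hR, ← Finset.sum_neg_distrib]
  refine Finset.sum_congr rfl fun k hk => ?_
  simp only [Finset.mem_range] at hk
  rcases le_or_gt k n with hkn | hkn
  · rw [chooseAddP p n k hp hk]
    have hexp : n + p - k = (n - k) + p := by omega
    rw [hexp, pow_add, neg_one_pow_char (ZMod p) p]
    ring
  · have h1 : (n.choose k : ZMod p) = 0 := by
      rw [Nat.choose_eq_zero_of_lt hkn]; simp
    rw [chooseAddP p n k hp hk, h1]
    simp
end

section
/- For all integers n ≥ 0, m ≥ 0, s ≥ 1 and every prime p ≥ 3, the derangement numbers satisfy D_{n+m·p^s} ≡ (-1)^m · D_n (mod p). -/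
open Finset

lemma derNum_eq_numDerangements (n : ℕ) : derNum n = numDerangements n := by
  rw [numDerangements_sum, derNum, ← Finset.sum_range_reflect]
  apply Finset.sum_congr rfl
  intro k hk
  rw [Finset.mem_range] at hk
  have hk' : k ≤ n := Nat.lt_succ_iff.mp hk
  have h0 : n + 1 - 1 - k = n - k := by omega
  have h1 : n - (n - k) = k := Nat.sub_sub_self hk'
  rw [h0, h1]
  have h2 : n.choose (n - k) * (n - k).factorial = (k + 1).ascFactorial (n - k) := by
    have := Nat.factorial_mul_ascFactorial k (n - k)
    have h3 := Nat.choose_mul_factorial_mul_factorial hk'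
    have h4 : k + (n - k) = n := Nat.add_sub_cancel' hk'
    rw [h4] at this
    have h5 : n.choose (n-k) = n.choose k := Nat.choose_symm hk'
    have hkpos := Nat.factorial_pos k
    have : k.factorial * (n.choose (n - k) * (n - k).factorial) = k.factorial * ((k + 1).ascFactorial (n - k)) := by
      rw [this, h5]; linarith [h3]
    exact Nat.eq_of_mul_eq_mul_left hkpos this
  rw [mul_comm ((-1:ℤ)^k)]
  rw [← Nat.cast_mul, h2]

lemma derNum_succ (n : ℕ) : derNum (n + 1) = (n + 1) * derNum n - (-1) ^ n := by
  rw [derNum_eq_numDerangements, derNum_eq_numDerangements, numDerangements_succ]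

lemma derNum_p (p : ℕ) (hp : p.Prime) (hp3 : 3 ≤ p) :
    (derNum p : ZMod p) = -1 := by
  have : (derNum p : ZMod p) = ∑ k ∈ Finset.range (p + 1),
      ((p.choose k : ZMod p) * (k.factorial : ZMod p)) * (-1) ^ (p - k) := by
    rw [derNum]; push_cast; rfl
  rw [this, Finset.sum_range_succ]
  have h1 : ∑ k ∈ Finset.range p,
      ((p.choose k : ZMod p) * (k.factorial : ZMod p)) * (-1) ^ (p - k)
      = ((p.choose 0 : ZMod p) * ((0:ℕ).factorial : ZMod p)) * (-1) ^ (p - 0) := by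
    apply Finset.sum_eq_single_of_mem 0 (Finset.mem_range.mpr hp.pos)
    intro k hk hk0
    have : (p : ℕ) ∣ p.choose k := hp.dvd_choose_self hk0 (Finset.mem_range.mp hk)
    have : (p.choose k : ZMod p) = 0 := by
      exact_mod_cast (ZMod.natCast_eq_zero_iff _ _).mpr this
    rw [this]; ring
  have h2 : (p.factorial : ZMod p) = 0 :=
    (ZMod.natCast_eq_zero_iff _ _).mpr (Nat.dvd_factorial hp.pos le_rfl)
  have hodd : Odd p := hp.odd_of_ne_two (by omega)
  rw [h1, h2]
  simp [hodd.neg_one_pow]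

lemma derNum_add_p (p : ℕ) (hp : p.Prime) (hp3 : 3 ≤ p) (n : ℕ) :
    (derNum (n + p) : ZMod p) = -(derNum n : ZMod p) := by
  induction n with
  | zero =>
    simp only [Nat.zero_add]
    rw [derNum_p p hp hp3]
    simp [derNum]
  | succ n ih =>
    have : n + 1 + p = (n + p) + 1 := by ring
    rw [this, derNum_succ, derNum_succ]
    push_cast
    rw [ih]
    have hodd : Odd p := hp.odd_of_ne_two (by omega)
    have : ((-1 : ZMod p)) ^ (n + p) = -(-1 : ZMod p) ^ n := by
      rw [pow_add, hodd.neg_one_pow]; ring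
    rw [this]
    have hpz : (p : ZMod p) = 0 := ZMod.natCast_self p
    push_cast [hpz]
    ring

lemma derNum_add_mul_p (p : ℕ) (hp : p.Prime) (hp3 : 3 ≤ p) (n t : ℕ) :
    (derNum (n + t * p) : ZMod p) = (-1) ^ t * (derNum n : ZMod p) := by
  induction t with
  | zero => simp
  | succ t ih =>
    have : n + (t + 1) * p = (n + t * p) + p := by ring
    rw [this, derNum_add_p p hp hp3, ih]
    ring

theorem derNum_add_mul_pow_prime (n m s : ℕ) (hs : 1 ≤ s) (p : ℕ) (hp : p.Prime)
    (hp3 : 3 ≤ p) :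
    derNum (n + m * p ^ s) ≡ (-1) ^ m * derNum n [ZMOD p] := by
  rw [← ZMod.intCast_eq_intCast_iff]
  have hps : p ^ s = p ^ (s - 1) * p := by
    conv_lhs => rw [← Nat.sub_add_cancel hs]
    rw [pow_succ]
  have : n + m * p ^ s = n + (m * p ^ (s - 1)) * p := by rw [hps]; ring
  rw [this, derNum_add_mul_p p hp hp3]
  have hodd : Odd (p ^ (s - 1)) := (hp.odd_of_ne_two (by omega)).pow
  have : ((-1 : ZMod p)) ^ (m * p ^ (s - 1)) = (-1) ^ m := by
    rw [mul_comm, pow_mul, hodd.neg_one_pow]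
  rw [this]
  push_cast
  ring
end

section
/- For all integers n ≥ 0, m ≥ 0, s ≥ 1 and every prime p ≥ 3, the polynomial congruence D_{n+m·p^s}(x) ≡ (x^{p^s} - 1)^m · D_n(x) holds modulo p, i.e. in (ℤ/pℤ)[x]. -/
open Polynomial Finset

/-- The derangement polynomial `D_n(x) = ∑_{k=0}^n C(n,k)·k!·(x-1)^{n-k}`. -/
noncomputable def derPoly (n : ℕ) : Polynomial ℤ :=
  ∑ k ∈ Finset.range (n + 1), ((n.choose k * k.factorial : ℤ)) • (X - 1) ^ (n - k)

/-!
Modulo `p` every summand of `D_N` with `k ≥ p` vanishes because `p ∣ k!`. For `k < p`, Lucas'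
theorem gives `C(n + p^s, k) ≡ C(n, k)`, and the Frobenius identity
`(X - 1)^(p^s) = X^(p^s) - 1` splits off the extra factor, so
`D_{n+p^s} ≡ (X^(p^s) - 1) · D_n`; iterating `m` times gives the theorem.
-/

theorem Nat.choose_add_modEq_of_dvd {p q : ℕ} [Fact p.Prime] (n : ℕ) {k : ℕ} (hpq : p ∣ q)
    (hk : k < p) : (n + q).choose k ≡ n.choose k [MOD p] := by
  have lucas (N : ℕ) : N.choose k ≡ (N % p).choose k [MOD p] := by
    simpa [Nat.mod_eq_of_lt hk, Nat.div_eq_of_lt hk] using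
      Choose.choose_modEq_choose_mod_mul_choose_div_nat (n := N) (k := k) (p := p)
  have hmod : (n + q) % p = n % p := by
    obtain ⟨c, rfl⟩ := hpq
    exact Nat.add_mul_mod_self_left n p c
  exact (lucas (n + q)).trans (hmod ▸ (lucas n).symm)

theorem derPoly_map {R : Type*} [CommRing R] (n : ℕ) :
    (derPoly n).map (Int.castRingHom R) =
      ∑ k ∈ range (n + 1), (n.choose k : R[X]) * (k.factorial : R[X]) * (X - 1) ^ (n - k) := by
  simp [derPoly, Polynomial.map_sum]

section CharP

variable {R : Type*} [CommRing R] {p : ℕ} [Fact p.Prime] [CharP R p]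

theorem choose_add_mul_factorial_mul_X_sub_one_pow {q : ℕ} (hpq : p ∣ q) (n k : ℕ) :
    ((n + q).choose k : R[X]) * (k.factorial : R[X]) * (X - 1) ^ (n + q - k) =
      (X - 1) ^ q * ((n.choose k : R[X]) * (k.factorial : R[X]) * (X - 1) ^ (n - k)) := by
  rcases lt_or_ge k p with hkp | hpk
  · have hchoose : ((n + q).choose k : R[X]) = n.choose k :=
      (CharP.natCast_eq_natCast R[X] p).mpr (Nat.choose_add_modEq_of_dvd n hpq hkp)
    rcases le_or_gt k n with hkn | hnk
    · rw [hchoose, show n + q - k = q + (n - k) by omega, pow_add]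
      ring
    · simp [hchoose, Nat.choose_eq_zero_of_lt hnk]
  · have hfact : (k.factorial : R[X]) = 0 :=
      (CharP.cast_eq_zero_iff R[X] p _).mpr (Nat.dvd_factorial (Fact.out : p.Prime).pos hpk)
    simp [hfact]

theorem derPoly_map_add_prime_pow (n : ℕ) {s : ℕ} (hs : s ≠ 0) :
    (derPoly (n + p ^ s)).map (Int.castRingHom R) =
      (X ^ p ^ s - 1) * (derPoly n).map (Int.castRingHom R) := by
  have frobenius : ((X : R[X]) - 1) ^ p ^ s = X ^ p ^ s - 1 := by
    simpa using sub_pow_char_pow (R := R[X]) (p := p) (n := s) X 1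
  rw [derPoly_map, derPoly_map, ← frobenius, mul_sum,
    sum_subset (range_subset_range.mpr (by omega : n + 1 ≤ n + p ^ s + 1))]
  · exact sum_congr rfl fun k _ ↦
      choose_add_mul_factorial_mul_X_sub_one_pow (dvd_pow_self p hs) n k
  · intro k _ hk
    rw [Nat.choose_eq_zero_of_lt (by simpa using hk : n < k)]
    simp

end CharP

theorem derPoly_congr_general (n m s : ℕ) (hs : 1 ≤ s) (p : ℕ) (hp : p.Prime) :
    (derPoly (n + m * p ^ s)).map (Int.castRingHom (ZMod p)) =
      (X ^ (p ^ s) - 1) ^ m * (derPoly n).map (Int.castRingHom (ZMod p)) := by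
  have : Fact p.Prime := ⟨hp⟩
  induction m with
  | zero => simp
  | succ m ih =>
    rw [add_one_mul, ← add_assoc, derPoly_map_add_prime_pow _ (by omega), ih, pow_succ]
    ring

theorem derPoly_congr (n m s : ℕ) (hs : 1 ≤ s) (p : ℕ) (hp : p.Prime) (hp3 : 3 ≤ p) :
    (derPoly (n + m * p ^ s)).map (Int.castRingHom (ZMod p)) =
      (X ^ (p ^ s) - 1) ^ m * (derPoly n).map (Int.castRingHom (ZMod p)) :=
  derPoly_congr_general n m s hs p hp
end

section
/- For every integer m ≥ 0, every integer s ≥ 1 and every prime p ≥ 3, the derangement polynomial satisfies D_{m·p^s}(x) ≡ (x^{p^s} - 1)^m modulo p in (ℤ/pℤ)[x]. -/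
open Polynomial Finset

lemma dvd_descFactorial_of_dvd {p n : ℕ} (hpn : p ∣ n) (k : ℕ) (hk : 1 ≤ k) :
    p ∣ n.descFactorial k := by
  induction k with
  | zero => omega
  | succ j ih =>
    rcases Nat.eq_zero_or_pos j with hj | hj
    · subst hj; simpa using hpn
    · exact (ih hj).mul_left _

theorem derPoly_mul_pow_prime (m s : ℕ) (hs : 1 ≤ s) (p : ℕ) (hp : p.Prime) (hp3 : 3 ≤ p) :
    (derPoly (m * p ^ s)).map (Int.castRingHom (ZMod p)) = (X ^ (p ^ s) - 1) ^ m := by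
  haveI := Fact.mk hp
  set n := m * p ^ s with hn
  have hpn : p ∣ n := by
    exact Dvd.dvd.mul_left (dvd_pow_self p (by omega)) m
  rw [derPoly, Polynomial.map_sum]
  rw [Finset.sum_eq_single 0]
  · simp only [Nat.choose_zero_right, Nat.factorial_zero, Nat.cast_one, mul_one, one_smul,
      Nat.sub_zero, Polynomial.map_pow, Polynomial.map_sub, Polynomial.map_X,
      Polynomial.map_one]
    rw [hn, mul_comm m, pow_mul, sub_pow_char_pow, one_pow]
  · intro k hk hk0
    have hdvd : p ∣ n.choose k * k.factorial := by
      have := dvd_descFactorial_of_dvd hpn k (by omega)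
      rwa [Nat.descFactorial_eq_factorial_mul_choose, mul_comm] at this
    have hz : (((n.choose k * k.factorial : ℤ)) : ZMod p) = 0 := by
      push_cast
      exact_mod_cast (ZMod.natCast_eq_zero_iff _ p).mpr hdvd
    rw [zsmul_eq_mul, Polynomial.map_mul, Polynomial.map_intCast,
      show (((n.choose k * k.factorial : ℤ)) : (ZMod p)[X])
          = Polynomial.C (((n.choose k * k.factorial : ℤ)) : ZMod p) by push_cast; simp, hz]
    simp
  · intro h; simp at h
end

section
/- Let p ≥ 3 be prime, q an integer with p ∤ (q-1), and n ≥ 0, m ≥ 0 integers. Then D_{n+m·p·(p-1)}(q) ≡ D_n(q) (mod p). -/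
open Polynomial Finset

lemma derPoly_eval_zmod (p : ℕ) (q : ℤ) (N : ℕ) :
    (((derPoly N).eval q : ℤ) : ZMod p) =
      ∑ k ∈ Finset.range (N + 1),
        (∏ i ∈ Finset.range k, ((N : ZMod p) - (i : ZMod p))) * ((q - 1 : ℤ) : ZMod p) ^ (N - k) := by
  simp only [derPoly, eval_finset_sum, eval_smul, eval_pow, eval_sub, eval_X, eval_one,
    zsmul_eq_mul, eval_mul, eval_intCast, eval_natCast, Int.cast_sum, Int.cast_mul, Int.cast_pow,
    Int.cast_sub, Int.cast_one, Int.cast_natCast]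
  refine Finset.sum_congr rfl fun k hk => ?_
  have hkN : k ≤ N := Nat.lt_succ_iff.mp (Finset.mem_range.mp hk)
  congr 1
  have h1 : N.choose k * k.factorial = N.descFactorial k := by
    rw [Nat.descFactorial_eq_factorial_mul_choose]; ring
  rw [← Nat.cast_mul, h1, Nat.descFactorial_eq_prod_range, Nat.cast_prod]
  refine Finset.prod_congr rfl fun i hi => ?_
  have : i ≤ N := le_trans (Nat.le_of_lt_succ (Nat.lt_succ_of_lt (Finset.mem_range.mp hi))) hkN
  push_cast [Nat.cast_sub this]
  ring

theorem derPoly_eval_congr (p : ℕ) (hp : p.Prime) (hp3 : 3 ≤ p) (q : ℤ)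
    (hq : ¬ (p : ℤ) ∣ (q - 1)) (n m : ℕ) :
    (derPoly (n + m * p * (p - 1))).eval q ≡ (derPoly n).eval q [ZMOD p] := by
  haveI : Fact p.Prime := ⟨hp⟩
  rw [← ZMod.intCast_eq_intCast_iff]
  set t : ZMod p := ((q - 1 : ℤ) : ZMod p) with ht
  have htne : t ≠ 0 := by
    rw [ht, Ne, ZMod.intCast_zmod_eq_zero_iff_dvd]
    exact hq
  have hfermat : t ^ (p - 1) = 1 := ZMod.pow_card_sub_one_eq_one htne
  set n2 := n + m * p * (p - 1) with hn2
  have hcast : ((n2 : ℕ) : ZMod p) = (n : ZMod p) := by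
    rw [hn2]; push_cast [ZMod.natCast_self]; ring
  rw [derPoly_eval_zmod, derPoly_eval_zmod, hcast]
  -- restrict the big sum to range (n+1)
  rw [← Finset.sum_subset (Finset.range_subset_range.mpr (Nat.succ_le_succ (Nat.le_add_right n _)))
      (fun k _ hk => ?_)]
  · refine Finset.sum_congr rfl fun k hk => ?_
    have hkn : k ≤ n := Nat.lt_succ_iff.mp (Finset.mem_range.mp hk)
    have hexp : n2 - k = (n - k) + m * p * (p - 1) := by omega
    rw [hexp, pow_add]
    have : t ^ (m * p * (p - 1)) = 1 := by
      rw [mul_comm (m * p) (p - 1), pow_mul, hfermat, one_pow]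
    rw [this, mul_one]
  · -- extra terms vanish: k > n so the product has the factor ↑n - ↑n = 0
    have hkn : n < k := by
      by_contra h
      exact hk (Finset.mem_range.mpr (Nat.lt_succ_of_le (Nat.le_of_not_lt h)))
    have : (∏ i ∈ Finset.range k, ((n : ZMod p) - (i : ZMod p))) = 0 := by
      apply Finset.prod_eq_zero (Finset.mem_range.mpr hkn)
      simp
    rw [this, zero_mul]
end

section
/- For every integer n ≥ 3, the derangement polynomials satisfy the identity D_n(x) = Σ_{i=1}^{n-3} (n-i)·D_{n-i}(x) + 3·D_2(x) + Σ_{i=3}^{n} (x-1)^i. -/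
/-
Summing the recurrence `D_k = k·D_{k-1} + (x-1)^k` over `3 ≤ k ≤ n` telescopes: the left side
contributes `D_n + ∑_{3 ≤ k < n} D_k` and the right side `∑_{2 ≤ k < n} (k+1)·D_k`, leaving
`D_n = ∑_{3 ≤ k < n} k·D_k + 3·D_2 + ∑_{3 ≤ k ≤ n} (x-1)^k`. Reflecting `k = n - i` gives the identity.
-/

open Polynomial Finset

lemma choose_succ_mul_factorial_succ (n k : ℕ) :
    (n + 1).choose (k + 1) * (k + 1).factorial = (n + 1) * (n.choose k * k.factorial) := by
  rw [Nat.factorial_succ, ← mul_assoc, ← Nat.add_one_mul_choose_eq]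
  ring

lemma derPoly_succ (n : ℕ) :
    derPoly (n + 1) = ((n + 1 : ℕ) : ℤ[X]) * derPoly n + (X - 1) ^ (n + 1) := by
  rw [derPoly, sum_range_succ', derPoly, mul_sum]
  simp only [Nat.choose_zero_right, Nat.factorial_zero, Nat.cast_one, mul_one, one_smul,
    Nat.sub_zero]
  congr 1
  refine sum_congr rfl fun k _ => ?_
  rw [Nat.add_sub_add_right, zsmul_eq_mul, zsmul_eq_mul]
  have hcoeff := congrArg (Nat.cast : ℕ → ℤ[X]) (choose_succ_mul_factorial_succ n k)
  push_cast at hcoeff ⊢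
  rw [hcoeff]
  ring

lemma derPoly_eq_sum_Ico_add {m n : ℕ} (hmn : m + 1 ≤ n) :
    derPoly n = (∑ k ∈ Ico (m + 1) n, (k : ℤ[X]) * derPoly k) +
      ((m + 1 : ℕ) : ℤ[X]) * derPoly m + ∑ k ∈ Icc (m + 1) n, (X - 1) ^ k := by
  induction n, hmn using Nat.le_induction with
  | base => simp [derPoly_succ]
  | succ n hmn ih =>
    calc derPoly (n + 1) = (n : ℤ[X]) * derPoly n + derPoly n + (X - 1) ^ (n + 1) := by
          rw [derPoly_succ]; push_cast; ring
      _ = _ := by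
          rw [sum_Ico_succ_top hmn, sum_Icc_succ_top (by omega)]
          linear_combination ih

theorem derPoly_identity (n : ℕ) (hn : 3 ≤ n) :
    derPoly n =
      (∑ i ∈ Finset.Icc 1 (n - 3), ((n - i : ℕ) : Polynomial ℤ) * derPoly (n - i)) +
        3 * derPoly 2 + ∑ i ∈ Finset.Icc 3 n, (X - 1) ^ i := by
  have hreflect : ∑ i ∈ Icc 1 (n - 3), ((n - i : ℕ) : ℤ[X]) * derPoly (n - i) =
      ∑ k ∈ Ico 3 n, (k : ℤ[X]) * derPoly k := by
    rw [← Ico_add_one_right_eq_Icc,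
      sum_Ico_reflect (fun k => (k : ℤ[X]) * derPoly k) 1 (by omega : n - 3 + 1 ≤ n + 1)]
    congr 2; omega
  rw [hreflect, derPoly_eq_sum_Ico_add (m := 2) hn]
  norm_num
end

section
/- For all integers n ≥ 0, r ≥ 0, m ≥ 0, s ≥ 1 and every prime p ≥ 3, the r-derangement polynomials satisfy D_{n+m·p^s, r}(x) ≡ (x^{p^s} - 1)^m · D_{n,r}(x) modulo p in (ℤ/pℤ)[x]. -/
/-!
Modulo `p` the factor `k!` kills every term of `D_{n,r}` with `k ≥ p`. For `k < p`, Lucas's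
theorem gives `C(n + m p^s, k) ≡ C(n, k)`, and the surplus factor `(x - 1)^{m p^s}` of the
corresponding term of `D_{n + m p^s, r}` equals `(x^{p^s} - 1)^m` by the Frobenius identity.
-/

open Polynomial Finset

/-- The r-derangement polynomial `D_{n,r}(x) = ∑_{k=0}^n C(n,k)·C(k+r,k)·k!·(x-1)^{n-k}`. -/
noncomputable def rDerPoly (n r : ℕ) : Polynomial ℤ :=
  ∑ k ∈ Finset.range (n + 1),
    ((n.choose k * (k + r).choose k * k.factorial : ℤ)) • (X - 1) ^ (n - k)

theorem natCast_choose_add_of_dvd {p : ℕ} [Fact p.Prime] {n a k : ℕ} (ha : p ∣ a) (hk : k < p) :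
    ((n + a).choose k : ZMod p) = n.choose k := by
  have lucas : ∀ N : ℕ, (N.choose k : ZMod p) = (N % p).choose k := by
    intro N
    have h := Choose.choose_modEq_choose_mod_mul_choose_div (n := N) (k := k) (p := p)
    rw [Nat.mod_eq_of_lt hk, Nat.div_eq_of_lt hk, Nat.choose_zero_right, Nat.cast_one,
      mul_one] at h
    exact_mod_cast (ZMod.intCast_eq_intCast_iff _ _ p).mpr h
  rw [lucas, lucas n, Nat.add_mod, Nat.mod_eq_zero_of_dvd ha, add_zero, Nat.mod_mod]

theorem map_rDerPoly {R : Type*} [CommRing R] (n r : ℕ) :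
    (rDerPoly n r).map (Int.castRingHom R) =
      ∑ k ∈ range (n + 1), C (n.choose k * (k + r).choose k * k.factorial : R) *
        (X - 1) ^ (n - k) := by
  simp [rDerPoly, Polynomial.map_sum, smul_eq_C_mul]

theorem map_rDerPoly_zmod_eq_sum_range (p : ℕ) [Fact p.Prime] (n r : ℕ) :
    (rDerPoly n r).map (Int.castRingHom (ZMod p)) =
      ∑ k ∈ range p, C (n.choose k * (k + r).choose k * k.factorial : ZMod p) *
        (X - 1) ^ (n - k) := by
  rw [map_rDerPoly, ← eventually_constant_sum (N := n + 1) _ (le_max_left _ p),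
    eventually_constant_sum (N := p) _ (le_max_right (n + 1) p)]
  · intro k hk
    simp [(ZMod.natCast_eq_zero_iff _ p).mpr (Nat.dvd_factorial (Fact.out : p.Prime).pos hk)]
  · intro k hk
    simp [Nat.choose_eq_zero_of_lt (Nat.lt_of_succ_le hk)]

theorem rDerPoly_congr_general (n r m s : ℕ) (hs : 1 ≤ s) (p : ℕ) (hp : p.Prime) :
    (rDerPoly (n + m * p ^ s) r).map (Int.castRingHom (ZMod p)) =
      (X ^ (p ^ s) - 1) ^ m * (rDerPoly n r).map (Int.castRingHom (ZMod p)) := by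
  have := Fact.mk hp
  rw [map_rDerPoly_zmod_eq_sum_range, map_rDerPoly_zmod_eq_sum_range, mul_sum]
  refine sum_congr rfl fun k hk => ?_
  have hchoose : ((n + m * p ^ s).choose k : ZMod p) = n.choose k :=
    natCast_choose_add_of_dvd (Dvd.dvd.mul_left (dvd_pow_self p (by omega)) m) (mem_range.1 hk)
  rcases le_or_gt k n with hkn | hnk
  · have frobenius : (X - 1 : (ZMod p)[X]) ^ (m * p ^ s) = (X ^ p ^ s - 1) ^ m := by
      rw [pow_mul', sub_pow_char_pow, one_pow]
    rw [hchoose, Nat.sub_add_comm hkn, pow_add, frobenius]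
    ring
  · simp [hchoose, Nat.choose_eq_zero_of_lt hnk]

theorem rDerPoly_congr (n r m s : ℕ) (hs : 1 ≤ s) (p : ℕ) (hp : p.Prime) (hp3 : 3 ≤ p) :
    (rDerPoly (n + m * p ^ s) r).map (Int.castRingHom (ZMod p)) =
      (X ^ (p ^ s) - 1) ^ m * (rDerPoly n r).map (Int.castRingHom (ZMod p)) :=
  rDerPoly_congr_general n r m s hs p hp
end

section
/- For all integers n ≥ 0, r ≥ 0, m ≥ 0 and every prime p ≥ 3, the numbers D_{n,r}(0) satisfy D_{n+2mp, r}(0) ≡ D_{n,r}(0) (mod p). -/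
open Finset

/-- The r-derangement constant `D_{n,r}(0) = ∑_{k=0}^n C(n,k)·C(k+r,k)·k!·(-1)^{n-k}`. -/
def rDerNum (n r : ℕ) : ℤ :=
  ∑ k ∈ Finset.range (n + 1),
    (n.choose k * (k + r).choose k * k.factorial : ℤ) * (-1) ^ (n - k)

private lemma rDerNum_eq (n r : ℕ) :
    rDerNum n r = (-1) ^ n * ∑ k ∈ Finset.range (n + 1),
      (n.choose k * (k + r).choose k * k.factorial : ℤ) * (-1) ^ k := by
  rw [rDerNum, mul_sum]
  refine sum_congr rfl fun k hk => ?_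
  have hk' : k ≤ n := Nat.lt_succ_iff.mp (mem_range.mp hk)
  have hsign : ((-1 : ℤ)) ^ (n - k) = (-1) ^ n * (-1) ^ k := by
    have h : n + k = (n - k) + 2 * k := by omega
    have : ((-1 : ℤ)) ^ (n + k) = (-1) ^ (n - k) := by
      rw [h, pow_add, pow_mul]; simp
    rw [← this, pow_add]
  rw [hsign]
  try ring

private lemma lucas_small (p : ℕ) [Fact p.Prime] (N k : ℕ) (hk : k < p) :
    ((N.choose k : ℤ) : ZMod p) = (((N % p).choose k : ℤ) : ZMod p) := by
  have h := Choose.choose_modEq_choose_mod_mul_choose_div (p := p) (n := N) (k := k)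
  have := (ZMod.intCast_eq_intCast_iff _ _ _).mpr h
  rw [this]
  rw [Nat.mod_eq_of_lt hk, Nat.div_eq_of_lt hk]
  push_cast
  simp

private lemma key_sum (p : ℕ) [Fact p.Prime] (N r : ℕ) :
    ((∑ k ∈ Finset.range (N + 1),
        (N.choose k * (k + r).choose k * k.factorial : ℤ) * (-1) ^ k : ℤ) : ZMod p)
      = ∑ k ∈ Finset.range p,
          (((N % p).choose k * (k + r).choose k * k.factorial : ℤ) * (-1) ^ k : ZMod p) := by
  have hp := (Fact.out : p.Prime)
  set F : ℕ → ZMod p := fun k =>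
    (((N % p).choose k * (k + r).choose k * k.factorial : ℤ) * (-1) ^ k : ZMod p) with hF
  have hfact : ∀ k, p ≤ k → ((k.factorial : ℤ) : ZMod p) = 0 := by
    intro k hk
    have : (p : ℤ) ∣ (k.factorial : ℤ) := by
      exact_mod_cast Int.natCast_dvd_natCast.mpr (Nat.dvd_factorial hp.pos hk)
    push_cast
    exact_mod_cast (ZMod.natCast_eq_zero_iff _ _).mpr (Nat.dvd_factorial hp.pos hk)
  have hFzero : ∀ k, N + 1 ≤ k ∨ p ≤ k → F k = 0 := by
    intro k hk
    rcases lt_or_ge k p with h | h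
    · have hk' : N + 1 ≤ k := by omega
      have : (N % p).choose k = 0 :=
        Nat.choose_eq_zero_of_lt (lt_of_le_of_lt (Nat.mod_le _ _) (by omega))
      simp [hF, this]
    · have := hfact k h
      simp only [hF]
      push_cast
      push_cast at this
      rw [this]
      ring
  have hcast : ((∑ k ∈ Finset.range (N + 1),
        (N.choose k * (k + r).choose k * k.factorial : ℤ) * (-1) ^ k : ℤ) : ZMod p)
      = ∑ k ∈ Finset.range (N + 1),
          ((N.choose k * (k + r).choose k * k.factorial : ℤ) * (-1) ^ k : ZMod p) := by
    push_cast; rfl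
  rw [hcast]
  have hterm : ∀ k ∈ Finset.range (N + 1),
      ((N.choose k * (k + r).choose k * k.factorial : ℤ) * (-1) ^ k : ZMod p) = F k := by
    intro k hk
    rcases lt_or_ge k p with h | h
    · have := lucas_small p N k h
      simp only [hF]
      push_cast
      push_cast at this
      rw [this]
    · have h1 := hfact k h
      push_cast at h1
      have h2 := hFzero k (Or.inr h)
      rw [h2]
      push_cast
      rw [h1]
      ring
  rw [sum_congr rfl hterm]
  -- both sums equal sum over range (max (N+1) p)
  have h1 : ∑ k ∈ Finset.range (N + 1), F k = ∑ k ∈ Finset.range (max (N + 1) p), F k := by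
    refine sum_subset (range_subset_range.mpr (le_max_left _ _)) ?_
    intro k _ hk
    exact hFzero k (Or.inl (by simpa using mem_range.not.mp hk))
  have h2 : ∑ k ∈ Finset.range p, F k = ∑ k ∈ Finset.range (max (N + 1) p), F k := by
    refine sum_subset (range_subset_range.mpr (le_max_right _ _)) ?_
    intro k _ hk
    exact hFzero k (Or.inr (by simpa using mem_range.not.mp hk))
  rw [h1, ← h2]

theorem rDerNum_add_two_mul_prime (n r m : ℕ) (p : ℕ) (hp : p.Prime) (hp3 : 3 ≤ p) :
    rDerNum (n + 2 * m * p) r ≡ rDerNum n r [ZMOD p] := by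
  haveI : Fact p.Prime := ⟨hp⟩
  have hmod : (n + 2 * m * p) % p = n % p := Nat.add_mul_mod_self_right n (2 * m) p
  rw [← ZMod.intCast_eq_intCast_iff, rDerNum_eq, rDerNum_eq, Int.cast_mul, Int.cast_mul,
    key_sum p (n + 2 * m * p) r, key_sum p n r, hmod]
  push_cast
  have hsign : ((-1 : ZMod p)) ^ (n + 2 * m * p) = (-1) ^ n := by
    rw [pow_add, pow_mul]
    simp [pow_mul]
  rw [hsign]
end

section
/- For every nonnegative integer n, every r ≥ 0 and every prime p, the r-derangement constants satisfy D_{n+p, r}(0) ≡ -D_{n,r}(0) (mod p). -/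
open Finset

private lemma cast_rDerNum (p : ℕ) (hp : p.Prime) (N r : ℕ) :
    ((rDerNum N r : ℤ) : ZMod p) =
      ∑ k ∈ Finset.range p,
        ((N.choose k : ZMod p) * ((k + r).choose k : ZMod p) * (k.factorial : ZMod p))
          * (-1) ^ (N - k) := by
  unfold rDerNum
  push_cast
  rw [show ∑ k ∈ Finset.range (N + 1),
        ((N.choose k : ZMod p) * ((k + r).choose k : ZMod p) * (k.factorial : ZMod p))
          * (-1) ^ (N - k)
      = ∑ k ∈ Finset.range (max (N + 1) p),
        ((N.choose k : ZMod p) * ((k + r).choose k : ZMod p) * (k.factorial : ZMod p))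
          * (-1) ^ (N - k) from
    Finset.sum_subset (Finset.range_subset_range.mpr (le_max_left _ _)) (by
      intro k _ hk
      rw [Finset.mem_range, not_lt] at hk
      rw [Nat.choose_eq_zero_of_lt (by omega)]
      simp)]
  refine (Finset.sum_subset (Finset.range_subset_range.mpr (le_max_right _ _)) ?_).symm
  intro k _ hk
  rw [Finset.mem_range, not_lt] at hk
  have : (k.factorial : ZMod p) = 0 :=
    (ZMod.natCast_eq_zero_iff _ _).mpr (Nat.dvd_factorial hp.pos hk)
  rw [this]
  ring

private lemma choose_add_prime_congr (p : ℕ) (hp : p.Prime) (n k : ℕ) (hk : k < p) :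
    ((n + p).choose k : ZMod p) = (n.choose k : ZMod p) := by
  haveI : Fact p.Prime := ⟨hp⟩
  have h1 := @Choose.choose_modEq_choose_mod_mul_choose_div (n + p) k p _
  have h2 := @Choose.choose_modEq_choose_mod_mul_choose_div n k p _
  simp only [Nat.mod_eq_of_lt hk, Nat.div_eq_of_lt hk, Nat.choose_zero_right,
    Nat.add_mod_right, Nat.cast_one, mul_one] at h1 h2
  have e1 := (ZMod.intCast_eq_intCast_iff _ _ _).mpr h1
  have e2 := (ZMod.intCast_eq_intCast_iff _ _ _).mpr h2
  push_cast at e1 e2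
  rw [e1, e2]

theorem rDerNum_add_prime (n r : ℕ) (p : ℕ) (hp : p.Prime) :
    rDerNum (n + p) r ≡ -rDerNum n r [ZMOD p] := by
  haveI : Fact p.Prime := ⟨hp⟩
  rw [← ZMod.intCast_eq_intCast_iff]
  rw [Int.cast_neg, cast_rDerNum p hp, cast_rDerNum p hp, ← Finset.sum_neg_distrib]
  refine Finset.sum_congr rfl ?_
  intro k hk
  rw [Finset.mem_range] at hk
  rw [choose_add_prime_congr p hp n k hk]
  rcases le_or_gt k n with h | h
  · have hsub : n + p - k = (n - k) + p := by omega
    rw [hsub, pow_add, neg_one_pow_char (ZMod p) p]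
    ring
  · have hz : n.choose k = 0 := Nat.choose_eq_zero_of_lt h
    rw [hz]
    simp
end

section
/- For every nonnegative integer n, every r ≥ 0 and every prime p ≥ 3, evaluating the r-derangement polynomial at 2 gives D_{n+p,r}(2) ≡ D_{n,r}(2) (mod p). -/
open Polynomial Finset

/-!
At `x = 2` the factor `(x - 1)^(n-k)` disappears, so `D_{n,r}(2) = ∑ₖ C(n,k) aₖ` with
`aₖ = C(k+r,k)·k!`. For `k ≥ p` the factorial makes `aₖ ≡ 0 (mod p)`, and for `k < p` Lucas'
theorem gives `C(n+p,k) ≡ C(n,k) (mod p)`; hence the two sums agree termwise modulo `p`.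
-/

theorem rDerPoly_eval_two_eq_sum (n r : ℕ) :
    (rDerPoly n r).eval 2 =
      ∑ k ∈ range (n + 1), (n.choose k * (k + r).choose k * k.factorial : ℤ) := by
  simp [rDerPoly, eval_finsetSum]

section BinomialTransform

variable {p : ℕ} [Fact p.Prime]

theorem Int.choose_add_prime_modEq (n : ℕ) {k : ℕ} (hk : k < p) :
    ((n + p).choose k : ℤ) ≡ n.choose k [ZMOD p] := by
  have lucas (m : ℕ) : (m.choose k : ℤ) ≡ (m % p).choose k [ZMOD p] := by
    simpa [Nat.mod_eq_of_lt hk, Nat.div_eq_of_lt hk] using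
      Choose.choose_modEq_choose_mod_mul_choose_div (n := m) (k := k) (p := p)
  calc ((n + p).choose k : ℤ) ≡ ((n + p) % p).choose k [ZMOD p] := lucas (n + p)
    _ = (n % p).choose k := by rw [Nat.add_mod_right]
    _ ≡ n.choose k [ZMOD p] := (lucas n).symm

theorem sum_choose_mul_add_prime_modEq (a : ℕ → ℤ) (ha : ∀ k, p ≤ k → (p : ℤ) ∣ a k) (n : ℕ) :
    ∑ k ∈ range (n + p + 1), ((n + p).choose k : ℤ) * a k ≡
      ∑ k ∈ range (n + 1), (n.choose k : ℤ) * a k [ZMOD p] := by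
  have extend : ∑ k ∈ range (n + 1), (n.choose k : ℤ) * a k =
      ∑ k ∈ range (n + p + 1), (n.choose k : ℤ) * a k := by
    refine sum_subset (range_subset_range.mpr (by omega)) fun k _ hk => ?_
    rw [Nat.choose_eq_zero_of_lt (by simpa using hk), Nat.cast_zero, zero_mul]
  rw [extend]
  refine Int.ModEq.sum fun k _ => ?_
  rcases lt_or_ge k p with hk | hk
  · exact (Int.choose_add_prime_modEq n hk).mul_right _
  · have hak : a k ≡ 0 [ZMOD p] := Int.modEq_zero_iff_dvd.mpr (ha k hk)
    calc ((n + p).choose k : ℤ) * a k ≡ (n + p).choose k * 0 [ZMOD p] := hak.mul_left _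
      _ = n.choose k * 0 := by simp
      _ ≡ n.choose k * a k [ZMOD p] := (hak.mul_left _).symm

end BinomialTransform

theorem rDerPoly_eval_two_general (n r : ℕ) (p : ℕ) (hp : p.Prime) :
    (rDerPoly (n + p) r).eval 2 ≡ (rDerPoly n r).eval 2 [ZMOD p] := by
  have := Fact.mk hp
  simp only [rDerPoly_eval_two_eq_sum, mul_assoc]
  refine sum_choose_mul_add_prime_modEq _ (fun k hk => ?_) n
  exact Dvd.dvd.mul_left (by exact_mod_cast Nat.dvd_factorial hp.pos hk) _

theorem rDerPoly_eval_two (n r : ℕ) (p : ℕ) (hp : p.Prime) (hp3 : 3 ≤ p) :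
    (rDerPoly (n + p) r).eval 2 ≡ (rDerPoly n r).eval 2 [ZMOD p] :=
  rDerPoly_eval_two_general n r p hp
end

section
/- For every nonnegative integer n and every prime p, the total number of partitions of an n-set into ordered lists satisfies L_{n+p} ≡ L_n (mod p). -/
open Finset

/-- The Lah number `L(n,k) = C(n-1,k-1)·n!/k!`, with `L(0,0) = 1` and `L(n,0) = 0` for `n > 0`. -/
def lah (n k : ℕ) : ℕ :=
  if k = 0 then (if n = 0 then 1 else 0)
  else (n - 1).choose (k - 1) * n.factorial / k.factorial

lemma lah_mul_factorial {n k : ℕ} (h1 : 1 ≤ k) (h2 : k ≤ n) :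
    lah n k * k.factorial = (n - 1).choose (k - 1) * n.factorial := by
  unfold lah
  rw [if_neg (by omega)]
  exact Nat.div_mul_cancel (Dvd.dvd.mul_left (Nat.factorial_dvd_factorial h2) _)

lemma lah_eq_zero {n k : ℕ} (hn : 1 ≤ n) (h : n < k) : lah n k = 0 := by
  unfold lah
  rw [if_neg (by omega), Nat.choose_eq_zero_of_lt (by omega), Nat.zero_mul, Nat.zero_div]

lemma lah_zero_right {n : ℕ} (hn : 1 ≤ n) : lah n 0 = 0 := by
  unfold lah; rw [if_pos rfl, if_neg (by omega)]

lemma lah_self {n : ℕ} (hn : 1 ≤ n) : lah n n = 1 := by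
  have h := lah_mul_factorial hn (le_refl n)
  rw [Nat.choose_self, one_mul] at h
  exact Nat.eq_of_mul_eq_mul_right (Nat.factorial_pos n) (by rw [h, one_mul])

lemma lah_one_right {n : ℕ} (hn : 1 ≤ n) : lah n 1 = n.factorial := by
  have h := lah_mul_factorial (le_refl 1) hn
  simpa [Nat.factorial] using h

lemma choose_identity {m i : ℕ} (h : i + 1 ≤ m) :
    (m + 2) * (m + 1).choose (i + 1) = (i + 2) * m.choose i + (m + i + 3) * m.choose (i + 1) := by
  obtain ⟨e, rfl⟩ : ∃ e, m = i + 1 + e := ⟨m - i - 1, by omega⟩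
  have h1 : (i + 1 + e).choose (i + 1) * (i + 1) = (i + 1 + e).choose i * (e + 1) := by
    have := Nat.choose_succ_right_eq (i + 1 + e) i
    have h2 : i + 1 + e - i = e + 1 := by omega
    rwa [h2] at this
  have h2 : (i + 1 + e + 1).choose (i + 1) = (i + 1 + e).choose i + (i + 1 + e).choose (i + 1) :=
    Nat.choose_succ_succ _ _
  rw [h2]
  nlinarith [h1]

lemma lah_rec1 {n j : ℕ} (hn : 1 ≤ n) (hj : j ≤ n) :
    lah (n + 1) (j + 1) = lah n j + (n + j + 1) * lah n (j + 1) := by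
  apply Nat.eq_of_mul_eq_mul_right (Nat.factorial_pos (j + 1))
  have hL : lah (n + 1) (j + 1) * (j + 1).factorial = n.choose j * (n + 1).factorial := by
    simpa using lah_mul_factorial (n := n + 1) (k := j + 1) (by omega) (by omega)
  rw [hL]
  rcases Nat.eq_zero_or_pos j with rfl | hj1
  · rw [lah_zero_right hn, lah_one_right hn]
    simp [Nat.factorial_succ]
  · rcases eq_or_lt_of_le hj with rfl | hjn
    · rw [lah_self hn, lah_eq_zero hn (Nat.lt_succ_self _)]
      simp
    · obtain ⟨i, rfl⟩ : ∃ i, j = i + 1 := ⟨j - 1, by omega⟩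
      have hA : lah n (i + 1) * (i + 1).factorial = (n - 1).choose i * n.factorial := by
        simpa using lah_mul_factorial (n := n) (k := i + 1) (by omega) (by omega)
      have hB : lah n (i + 2) * (i + 2).factorial = (n - 1).choose (i + 1) * n.factorial := by
        simpa using lah_mul_factorial (n := n) (k := i + 2) (by omega) (by omega)
      obtain ⟨m, rfl⟩ : ∃ m, n = m + 1 := ⟨n - 1, by omega⟩
      have key := choose_identity (m := m) (i := i) (by omega)
      calc (m + 1).choose (i + 1) * (m + 1 + 1).factorial
          = ((m + 2) * (m + 1).choose (i + 1)) * (m + 1).factorial := by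
            rw [Nat.factorial_succ]; ring
        _ = ((i + 2) * m.choose i + (m + i + 3) * m.choose (i + 1)) * (m + 1).factorial := by
            rw [key]
        _ = (i + 2) * (m.choose i * (m + 1).factorial)
              + (m + i + 3) * (m.choose (i + 1) * (m + 1).factorial) := by ring
        _ = (i + 2) * (lah (m + 1) (i + 1) * (i + 1).factorial)
              + (m + i + 3) * (lah (m + 1) (i + 2) * (i + 2).factorial) := by
            rw [hA, hB]; simp
        _ = (lah (m + 1) (i + 1) + (m + 1 + (i + 1) + 1) * lah (m + 1) (i + 2)) * (i + 1 + 1).factorial := by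
            rw [Nat.factorial_succ (i + 1)]; ring

lemma lah_rec2 {n j : ℕ} (hn : 1 ≤ n) (hj : j ≤ n) :
    (j + 1) * lah (n + 1) (j + 1) = (n + 1) * lah n j + (n + 1) * ((j + 1) * lah n (j + 1)) := by
  apply Nat.eq_of_mul_eq_mul_right (Nat.factorial_pos j)
  have hL : lah (n + 1) (j + 1) * (j + 1).factorial = n.choose j * (n + 1).factorial := by
    simpa using lah_mul_factorial (n := n + 1) (k := j + 1) (by omega) (by omega)
  have e1 : (j + 1) * lah (n + 1) (j + 1) * j.factorial
      = lah (n + 1) (j + 1) * (j + 1).factorial := by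
    rw [Nat.factorial_succ]; ring
  rw [e1, hL]
  rcases Nat.eq_zero_or_pos j with rfl | hj1
  · rw [lah_zero_right hn, lah_one_right hn]
    simp [Nat.factorial_succ]
  · rcases eq_or_lt_of_le hj with rfl | hjn
    · rw [lah_self hn, lah_eq_zero hn (Nat.lt_succ_self _)]
      simp [Nat.factorial_succ]
    · obtain ⟨i, rfl⟩ : ∃ i, j = i + 1 := ⟨j - 1, by omega⟩
      have hA : lah n (i + 1) * (i + 1).factorial = (n - 1).choose i * n.factorial := by
        simpa using lah_mul_factorial (n := n) (k := i + 1) (by omega) (by omega)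
      have hB : lah n (i + 2) * (i + 2).factorial = (n - 1).choose (i + 1) * n.factorial := by
        simpa using lah_mul_factorial (n := n) (k := i + 2) (by omega) (by omega)
      obtain ⟨m, rfl⟩ : ∃ m, n = m + 1 := ⟨n - 1, by omega⟩
      have pascal : (m + 1).choose (i + 1) = m.choose i + m.choose (i + 1) :=
        Nat.choose_succ_succ _ _
      calc (m + 1).choose (i + 1) * (m + 1 + 1).factorial
          = (m + 2) * (m.choose i + m.choose (i + 1)) * (m + 1).factorial := by
            rw [pascal, Nat.factorial_succ (m + 1)]; ring
        _ = (m + 2) * (m.choose i * (m + 1).factorial)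
              + (m + 2) * (m.choose (i + 1) * (m + 1).factorial) := by ring
        _ = (m + 2) * (lah (m + 1) (i + 1) * (i + 1).factorial)
              + (m + 2) * (lah (m + 1) (i + 2) * (i + 2).factorial) := by rw [hA, hB]; simp
        _ = ((m + 1 + 1) * lah (m + 1) (i + 1)
              + (m + 1 + 1) * ((i + 1 + 1) * lah (m + 1) (i + 1 + 1))) * (i + 1).factorial := by
            rw [Nat.factorial_succ (i + 1), Nat.factorial_succ i]; ring


/-- `L_n`, the total number of partitions of an n-set into nonempty ordered lists. -/
def lahTotal (n : ℕ) : ℕ := ∑ k ∈ Finset.range (n + 1), lah n k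

def lahWeighted (n : ℕ) : ℕ := ∑ k ∈ Finset.range (n + 1), k * lah n k

lemma sum_shift_total {n : ℕ} (hn : 1 ≤ n) :
    ∑ i ∈ Finset.range (n + 1), lah n (i + 1) = lahTotal n := by
  have h1 : ∑ k ∈ Finset.range (n + 2), lah n k
      = ∑ i ∈ Finset.range (n + 1), lah n (i + 1) + lah n 0 := Finset.sum_range_succ' _ _
  have h2 : ∑ k ∈ Finset.range (n + 2), lah n k = lahTotal n + lah n (n + 1) :=
    Finset.sum_range_succ _ _
  rw [lah_eq_zero hn (Nat.lt_succ_self _)] at h2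
  rw [lah_zero_right hn] at h1
  omega

lemma sum_shift_weighted {n : ℕ} (hn : 1 ≤ n) :
    ∑ i ∈ Finset.range (n + 1), (i + 1) * lah n (i + 1) = lahWeighted n := by
  have h1 : ∑ k ∈ Finset.range (n + 2), k * lah n k
      = ∑ i ∈ Finset.range (n + 1), (i + 1) * lah n (i + 1) + 0 * lah n 0 :=
    Finset.sum_range_succ' _ _
  have h2 : ∑ k ∈ Finset.range (n + 2), k * lah n k
      = lahWeighted n + (n + 1) * lah n (n + 1) := Finset.sum_range_succ _ _
  rw [lah_eq_zero hn (Nat.lt_succ_self _)] at h2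
  omega

lemma recA {n : ℕ} (hn : 1 ≤ n) :
    lahTotal (n + 1) = (n + 1) * lahTotal n + lahWeighted n := by
  have h0 : lahTotal (n + 1)
      = ∑ i ∈ Finset.range (n + 1), lah (n + 1) (i + 1) + lah (n + 1) 0 :=
    Finset.sum_range_succ' _ _
  rw [lah_zero_right (by omega), Nat.add_zero] at h0
  rw [h0]
  have h1 : ∀ i ∈ Finset.range (n + 1),
      lah (n + 1) (i + 1) = lah n i + n * lah n (i + 1) + (i + 1) * lah n (i + 1) := by
    intro i hi
    rw [lah_rec1 hn (by simpa using Nat.lt_succ_iff.mp (Finset.mem_range.mp hi))]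
    ring
  rw [Finset.sum_congr rfl h1]
  rw [Finset.sum_add_distrib, Finset.sum_add_distrib, ← Finset.mul_sum,
    sum_shift_total hn, sum_shift_weighted hn]
  have : ∑ i ∈ Finset.range (n + 1), lah n i = lahTotal n := rfl
  rw [this]; ring

lemma recB {n : ℕ} (hn : 1 ≤ n) :
    lahWeighted (n + 1) = (n + 1) * lahTotal n + (n + 1) * lahWeighted n := by
  have h0 : lahWeighted (n + 1)
      = ∑ i ∈ Finset.range (n + 1), (i + 1) * lah (n + 1) (i + 1) + 0 * lah (n + 1) 0 :=
    Finset.sum_range_succ' _ _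
  rw [Nat.zero_mul, Nat.add_zero] at h0
  rw [h0]
  have h1 : ∀ i ∈ Finset.range (n + 1),
      (i + 1) * lah (n + 1) (i + 1) = (n + 1) * lah n i + (n + 1) * ((i + 1) * lah n (i + 1)) := by
    intro i hi
    exact lah_rec2 hn (Nat.lt_succ_iff.mp (Finset.mem_range.mp hi))
  rw [Finset.sum_congr rfl h1]
  rw [Finset.sum_add_distrib, ← Finset.mul_sum, ← Finset.mul_sum, sum_shift_weighted hn]
  have : ∑ i ∈ Finset.range (n + 1), lah n i = lahTotal n := rfl
  rw [this]
  ring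

lemma prime_dvd_lah {p k : ℕ} (hp : p.Prime) (h1 : 1 ≤ k) (h2 : k < p) : p ∣ lah p k := by
  have h := lah_mul_factorial h1 (le_of_lt h2)
  have hd : p ∣ lah p k * k.factorial := by
    rw [h]
    exact Dvd.dvd.mul_left (Nat.dvd_factorial hp.pos le_rfl) _
  refine (hp.dvd_mul.mp hd).resolve_right (fun hc => ?_)
  exact absurd ((Nat.Prime.dvd_factorial hp).mp hc) (by omega)

lemma cast_lahTotal_p {p : ℕ} (hp : p.Prime) : ((lahTotal p : ℕ) : ZMod p) = 1 := by
  unfold lahTotal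
  rw [Nat.cast_sum, Finset.sum_range_succ, lah_self hp.pos]
  rw [Finset.sum_eq_zero, Nat.cast_one, zero_add]
  intro k hk
  rcases Nat.eq_zero_or_pos k with rfl | hk1
  · rw [lah_zero_right hp.pos, Nat.cast_zero]
  · exact (ZMod.natCast_eq_zero_iff _ _).mpr
      (prime_dvd_lah hp hk1 (Finset.mem_range.mp hk))

lemma cast_lahWeighted_p {p : ℕ} (hp : p.Prime) : ((lahWeighted p : ℕ) : ZMod p) = 0 := by
  unfold lahWeighted
  rw [Nat.cast_sum, Finset.sum_range_succ, Finset.sum_eq_zero, zero_add]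
  · rw [lah_self hp.pos, Nat.mul_one, ZMod.natCast_self]
  · intro k hk
    rcases Nat.eq_zero_or_pos k with rfl | hk1
    · simp
    · exact (ZMod.natCast_eq_zero_iff _ _).mpr
        (Dvd.dvd.mul_left (prime_dvd_lah hp hk1 (Finset.mem_range.mp hk)) _)

lemma lahTotal_one : lahTotal 1 = 1 := by decide
lemma lahWeighted_one : lahWeighted 1 = 1 := by decide
lemma lahTotal_zero : lahTotal 0 = 1 := by decide

lemma key {p : ℕ} (hp : p.Prime) (n : ℕ) (hn : 1 ≤ n) :
    ((lahTotal (n + p) : ℕ) : ZMod p) = ((lahTotal n : ℕ) : ZMod p) ∧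
    ((lahWeighted (n + p) : ℕ) : ZMod p) = ((lahWeighted n : ℕ) : ZMod p) := by
  induction n, hn using Nat.le_induction with
  | base =>
    have h1 : (1 : ℕ) + p = p + 1 := by omega
    rw [h1, recA hp.pos, recB hp.pos, lahTotal_one, lahWeighted_one]
    push_cast
    rw [cast_lahTotal_p hp, cast_lahWeighted_p hp, ZMod.natCast_self]
    norm_num
  | succ n hn ih =>
    obtain ⟨ihT, ihW⟩ := ih
    have h1 : n + 1 + p = (n + p) + 1 := by omega
    rw [h1, recA (by omega), recB (by omega), recA hn, recB hn]
    push_cast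
    rw [ZMod.natCast_self, ihT, ihW]
    refine ⟨by ring, by ring⟩

theorem lahTotal_add_prime (n : ℕ) (p : ℕ) (hp : p.Prime) :
    lahTotal (n + p) ≡ lahTotal n [MOD p] := by
  rw [← ZMod.natCast_eq_natCast_iff]
  rcases Nat.eq_zero_or_pos n with rfl | hn
  · rw [Nat.zero_add, lahTotal_zero, cast_lahTotal_p hp, Nat.cast_one]
  · exact (key hp n hn).1
end

section
/- For all integers n ≥ 0, m ≥ 0, s ≥ 1 and every prime p ≥ 3, the modified Lah polynomials satisfy P_{n+m·p^s}(x) ≡ (x^{p^s} + 1)^m · P_n(x) modulo p in (ℤ/pℤ)[x]. -/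
open Polynomial Finset

/-- The modified Lah polynomial `P_n(x) = ∑_{k=0}^n C(n,k)·L_k·x^{n-k}`. -/
noncomputable def modLahPoly (n : ℕ) : Polynomial ℤ :=
  ∑ k ∈ Finset.range (n + 1), ((n.choose k * lahTotal k : ℤ)) • X ^ (n - k)

/-!
Let `φ : R[X][Y] → R[X]` be the `R[X]`-linear map with `φ(Yᵏ) = L_k`. By the binomial theorem
`P_n(x) = φ((Y + x)ⁿ)`. Modulo `p`, Frobenius gives `(Y + x)^(p^s) = Y^(p^s) + x^(p^s)`, and
`φ(Y^(p^s) g) = φ(g)` because `L` is `p`-periodic modulo `p`. That periodicity comes from the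
closed form `L_n = ∑_j C(n-1,j) C(n,j) j!`: the terms with `j ≥ p` vanish modulo `p`, and for
`j < p` Lucas' theorem gives `C(m+p,j) ≡ C(m,j)`.
-/

open scoped Nat

lemma lah_of_pos_of_le {n k : ℕ} (hk : 0 < k) (hkn : k ≤ n) :
    lah n k = (n - 1).choose (k - 1) * n.choose k * (n - k)! := by
  rw [lah, if_neg hk.ne', ← Nat.choose_mul_factorial_mul_factorial hkn,
    show (n - 1).choose (k - 1) * (n.choose k * k ! * (n - k)!) =
      (n - 1).choose (k - 1) * n.choose k * (n - k)! * (k !) by ring]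
  exact Nat.mul_div_cancel _ k.factorial_pos

-- At `n = 0` the truncated `n - 1 = 0` still gives the right value `L_0 = 1`.
lemma lahTotal_eq_sum (n : ℕ) :
    lahTotal n = ∑ j ∈ range (n + 1), (n - 1).choose j * n.choose j * j ! := by
  rw [lahTotal, ← sum_range_reflect]
  refine sum_congr rfl fun j hj ↦ ?_
  obtain hj | rfl := (Nat.lt_succ_iff.1 (mem_range.1 hj)).lt_or_eq
  · rw [Nat.add_sub_cancel, lah_of_pos_of_le (by omega) (by omega), Nat.sub_sub_self hj.le,
      Nat.choose_symm hj.le, Nat.choose_symm_of_eq_add (show n - 1 = n - j - 1 + j by omega)]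
  · rcases j with _ | j <;> simp [lah]

section Periodicity

variable {p : ℕ} [Fact p.Prime]

lemma choose_add_prime_modEq (n : ℕ) {j : ℕ} (hj : j < p) :
    (n + p).choose j ≡ n.choose j [MOD p] := by
  have lucas (m : ℕ) : m.choose j ≡ (m % p).choose j [MOD p] := by
    simpa [Nat.mod_eq_of_lt hj, Nat.div_eq_of_lt hj] using
      Choose.choose_modEq_choose_mod_mul_choose_div_nat (n := m) (k := j) (p := p)
  exact (lucas (n + p)).trans (by simpa using (lucas n).symm)

lemma choose_pred_mul_choose_add_prime (n : ℕ) {j : ℕ} (hj : j < p) :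
    ((n + p - 1).choose j * (n + p).choose j : ZMod p) = (n - 1).choose j * n.choose j := by
  have hadd (m : ℕ) : ((m + p).choose j : ZMod p) = m.choose j :=
    (ZMod.natCast_eq_natCast_iff _ _ _).2 (choose_add_prime_modEq m hj)
  rcases n with _ | n
  · have h0 := hadd 0
    rw [zero_add] at h0
    rcases j with _ | j <;> simp [h0]
  · rw [show n + 1 + p - 1 = n + p by omega, hadd, hadd, Nat.add_sub_cancel]

theorem lahTotal_periodic : Function.Periodic (fun n ↦ (lahTotal n : ZMod p)) p := by
  intro n
  have hfact {j : ℕ} (hj : p ≤ j) : (j ! : ZMod p) = 0 :=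
    (ZMod.natCast_eq_zero_iff _ _).2 (Nat.dvd_factorial (Fact.out : p.Prime).pos hj)
  simp only [lahTotal_eq_sum, Nat.cast_sum, Nat.cast_mul]
  refine (sum_congr rfl fun j _ ↦ ?_).trans
    (sum_subset (range_subset_range.2 (show n + 1 ≤ n + p + 1 by omega)) fun j _ hj ↦ ?_).symm
  · rcases lt_or_ge j p with hj | hj
    · rw [choose_pred_mul_choose_add_prime n hj]
    · simp [hfact hj]
  · simp [Nat.choose_eq_zero_of_lt (show n < j by simpa using hj)]

end Periodicity

section Umbral

variable {R : Type*} [CommRing R]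

noncomputable def umbralEval (a : ℕ → R) : R[X][X] →ₗ[R[X]] R[X] :=
  lsum fun k ↦ LinearMap.mulRight R[X] (C (a k))

lemma umbralEval_monomial (a : ℕ → R) (k : ℕ) (c : R[X]) :
    umbralEval a (monomial k c) = c * C (a k) := by
  simp [umbralEval]

lemma umbralEval_X_pow_mul {a : ℕ → R} {q : ℕ} (ha : Function.Periodic a q) (g : R[X][X]) :
    umbralEval a (X ^ q * g) = umbralEval a g := by
  induction g using Polynomial.induction_on' with
  | add f g hf hg => rw [mul_add, map_add, map_add, hf, hg]
  | monomial k c => rw [X_pow_mul_monomial, umbralEval_monomial, umbralEval_monomial, ha]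

lemma umbralEval_mul_X_pow_add_C_pow {a : ℕ → R} {q : ℕ} (ha : Function.Periodic a q)
    (g : R[X][X]) (m : ℕ) :
    umbralEval a (g * (X ^ q + C (X ^ q)) ^ m) = (X ^ q + 1) ^ m * umbralEval a g := by
  induction m with
  | zero => simp
  | succ m ih =>
    rw [pow_succ, ← mul_assoc, mul_add, map_add, mul_comm _ (X ^ q), umbralEval_X_pow_mul ha,
      mul_comm _ (C _), C_mul', map_smul, ih, smul_eq_mul]
    ring

lemma umbralEval_X_add_C_pow (a : ℕ → R) (n : ℕ) :
    umbralEval a ((X + C X) ^ n) = ∑ k ∈ range (n + 1), C (n.choose k * a k) * X ^ (n - k) := by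
  rw [add_pow, map_sum]
  refine sum_congr rfl fun k _ ↦ ?_
  rw [← C_pow, ← Polynomial.C_eq_natCast, mul_assoc, ← C_mul, mul_comm,
    C_mul_X_pow_eq_monomial, umbralEval_monomial]
  simp only [map_mul, map_natCast]
  ring

lemma map_modLahPoly (n : ℕ) :
    (modLahPoly n).map (Int.castRingHom R) =
      umbralEval (fun k ↦ (lahTotal k : R)) ((X + C X) ^ n) := by
  rw [umbralEval_X_add_C_pow, modLahPoly, Polynomial.map_sum]
  refine sum_congr rfl fun k _ ↦ ?_
  simp [smul_eq_C_mul]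

end Umbral

theorem modLahPoly_congr_general (n m s : ℕ) (hs : 1 ≤ s) (p : ℕ) (hp : p.Prime) :
    (modLahPoly (n + m * p ^ s)).map (Int.castRingHom (ZMod p)) =
      (X ^ (p ^ s) + 1) ^ m * (modLahPoly n).map (Int.castRingHom (ZMod p)) := by
  have := Fact.mk hp
  have hper : Function.Periodic (fun k ↦ (lahTotal k : ZMod p)) (p ^ s) := by
    obtain ⟨t, rfl⟩ := Nat.exists_eq_add_of_le' hs
    simpa [pow_succ] using lahTotal_periodic.nat_mul (p ^ t)
  rw [map_modLahPoly, map_modLahPoly, pow_add, pow_mul', add_pow_char_pow, ← C_pow,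
    umbralEval_mul_X_pow_add_C_pow hper]

theorem modLahPoly_congr (n m s : ℕ) (hs : 1 ≤ s) (p : ℕ) (hp : p.Prime) (hp3 : 3 ≤ p) :
    (modLahPoly (n + m * p ^ s)).map (Int.castRingHom (ZMod p)) =
      (X ^ (p ^ s) + 1) ^ m * (modLahPoly n).map (Int.castRingHom (ZMod p)) :=
  modLahPoly_congr_general n m s hs p hp
end

section
/- Let A : ℕ → ℤ be any sequence with A_0 = 1, let p be an odd prime and t an integer such that A_{n+p} ≡ t·A_n (mod p) for all n ≥ 0, and define the Appell polynomials A_n(x) = Σ_{k=0}^{n} C(n,k)·A_{n-k}·x^k. Then for all n ≥ 0 one has A_{n+p}(x) ≡ (x^p + t)·A_n(x) modulo p in (ℤ/pℤ)[x]. -/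
open Polynomial Finset

/-- The Appell polynomial `A_n(x) = ∑_{k=0}^n C(n,k)·A_{n-k}·x^k` attached to `A : ℕ → ℤ`. -/
noncomputable def appellPoly (A : ℕ → ℤ) (n : ℕ) : Polynomial ℤ :=
  ∑ k ∈ Finset.range (n + 1), ((n.choose k : ℤ) * A (n - k)) • X ^ k

lemma choose_add_prime_cast (p : ℕ) [Fact p.Prime] (n k : ℕ) :
    (((n + p).choose k : ZMod p)) =
      (n.choose k : ZMod p) + (if p ≤ k then (n.choose (k - p) : ZMod p) else 0) := by
  have hfrob : (X + 1 : Polynomial (ZMod p)) ^ p = X ^ p + 1 := by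
    rw [add_pow_char]; simp
  have h : ((X + 1 : Polynomial (ZMod p)) ^ (n + p)).coeff k =
      ((X + 1 : Polynomial (ZMod p)) ^ n * ((X : Polynomial (ZMod p)) ^ p + 1)).coeff k := by
    rw [pow_add, hfrob]
  rw [mul_add, mul_one, coeff_add, coeff_mul_X_pow'] at h
  simp only [coeff_X_add_one_pow] at h
  rw [h]
  split_ifs <;> ring

lemma coeff_appell (A : ℕ → ℤ) (m k : ℕ) :
    (appellPoly A m).coeff k = (m.choose k : ℤ) * A (m - k) := by
  rw [appellPoly, finset_sum_coeff]
  simp only [coeff_smul, coeff_X_pow, smul_eq_mul, mul_ite, mul_one, mul_zero]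
  rw [Finset.sum_ite_eq (Finset.range (m + 1)) k]
  by_cases hk : k ∈ Finset.range (m + 1)
  · rw [if_pos hk]
  · rw [if_neg hk]
    have : m.choose k = 0 := Nat.choose_eq_zero_of_lt (by simpa using hk)
    simp [this]

lemma coeff_appell_map (A : ℕ → ℤ) (p : ℕ) (m k : ℕ) :
    ((appellPoly A m).map (Int.castRingHom (ZMod p))).coeff k =
      (m.choose k : ZMod p) * ((A (m - k) : ℤ) : ZMod p) := by
  simp [coeff_map, coeff_appell]

theorem appell_add_prime (A : ℕ → ℤ) (hA0 : A 0 = 1) (p : ℕ) (hp : p.Prime) (hodd : Odd p)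
    (t : ℤ) (ht : ∀ n : ℕ, A (n + p) ≡ t * A n [ZMOD p]) (n : ℕ) :
    (appellPoly A (n + p)).map (Int.castRingHom (ZMod p)) =
      (X ^ p + C (t : ZMod p)) *
        (appellPoly A n).map (Int.castRingHom (ZMod p)) := by
  haveI : Fact p.Prime := ⟨hp⟩
  have ha : ∀ m : ℕ, ((A (m + p) : ℤ) : ZMod p) = (t : ZMod p) * ((A m : ℤ) : ZMod p) := by
    intro m
    have := (ZMod.intCast_eq_intCast_iff _ _ _).mpr (ht m)
    push_cast at this ⊢
    exact this
  ext k
  rw [show (X ^ p + C ((t : ℤ) : ZMod p)) * (appellPoly A n).map (Int.castRingHom (ZMod p)) =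
      (appellPoly A n).map (Int.castRingHom (ZMod p)) * X ^ p +
        C ((t : ℤ) : ZMod p) * (appellPoly A n).map (Int.castRingHom (ZMod p)) from by ring]
  rw [coeff_add, coeff_mul_X_pow', coeff_C_mul]
  simp only [coeff_appell_map]
  rw [choose_add_prime_cast, add_mul]
  by_cases hk : p ≤ k
  · rw [if_pos hk, if_pos hk]
    have h1 : n + p - k = n - (k - p) := by omega
    rw [h1]
    by_cases hkn : k ≤ n
    · have h3 : n - (k - p) = (n - k) + p := by omega
      rw [h3, ha]
      ring
    · have : n.choose k = 0 := Nat.choose_eq_zero_of_lt (by omega)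
      rw [this]
      push_cast
      ring
  · rw [if_neg hk, if_neg hk]
    by_cases hkn : k ≤ n
    · have h2 : n + p - k = (n - k) + p := by omega
      rw [h2, ha]
      ring
    · have hc : n.choose k = 0 := Nat.choose_eq_zero_of_lt (by omega)
      rw [hc]
      push_cast
      ring
end

section
/- Let A : ℕ → ℤ with A_0 = 1, p an odd prime, and t an integer with A_{n+p} ≡ t·A_n (mod p) for all n ≥ 0. Define A_n(x) = Σ_{k=0}^{n} C(n,k)·A_{n-k}·x^k. Then for all integers n ≥ 0, m ≥ 0 and s ≥ 1, A_{n+m·p^s}(x) ≡ (x^{p^s} + t)^m · A_n(x) modulo p in (ℤ/pℤ)[x]. -/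
open Polynomial Finset

lemma appell_coeff (A : ℕ → ℤ) (N k : ℕ) :
    (appellPoly A N).coeff k = (N.choose k : ℤ) * A (N - k) := by
  unfold appellPoly
  rw [finset_sum_coeff]
  simp only [coeff_smul, coeff_X_pow, smul_eq_mul, mul_ite, mul_one, mul_zero]
  rw [Finset.sum_ite_eq (range (N+1)) k]
  split_ifs with h
  · rfl
  · have hk : N < k := by simpa using h
    rw [Nat.choose_eq_zero_of_lt hk]
    simp

lemma choose_add_p (p : ℕ) [Fact p.Prime] (n k : ℕ) :
    (((n + p).choose k : ZMod p)) =
      (n.choose k : ZMod p) + if p ≤ k then (n.choose (k - p) : ZMod p) else 0 := by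
  have h2 : (X + 1 : (ZMod p)[X]) ^ (n + p)
      = (X + 1) ^ n + (X + 1) ^ n * X ^ p := by
    rw [pow_add, add_pow_char (p := p), one_pow, mul_add, mul_one, add_comm]
  have h3 := congrArg (fun f : (ZMod p)[X] => f.coeff k) h2
  simp only [coeff_X_add_one_pow, coeff_add, coeff_mul_X_pow'] at h3
  simpa using h3

lemma appell_step (A : ℕ → ℤ) (p : ℕ) [Fact p.Prime] (t : ℤ)
    (ht : ∀ n : ℕ, A (n + p) ≡ t * A n [ZMOD p]) (n : ℕ) :
    (appellPoly A (n + p)).map (Int.castRingHom (ZMod p)) =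
      (X ^ p + C (t : ZMod p)) * (appellPoly A n).map (Int.castRingHom (ZMod p)) := by
  ext k
  rw [coeff_map, appell_coeff A]
  rw [add_mul, coeff_add, coeff_C_mul, mul_comm (X ^ p : (ZMod p)[X]) _,
    coeff_mul_X_pow', coeff_map, coeff_map, appell_coeff A, appell_coeff A]
  simp only [Int.coe_castRingHom]
  push_cast
  rw [choose_add_p p n k, add_mul]
  have h1 : ((n.choose k : ZMod p)) * ((A (n + p - k) : ZMod p))
      = (t : ZMod p) * ((n.choose k : ZMod p) * (A (n - k) : ZMod p)) := by
    by_cases hk : k ≤ n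
    · have hnk : n + p - k = (n - k) + p := by omega
      have hc := (ZMod.intCast_eq_intCast_iff _ _ _).mpr (ht (n - k))
      push_cast at hc
      rw [hnk, hc]; ring
    · rw [Nat.choose_eq_zero_of_lt (by omega)]; push_cast; ring
  have h2 : (if p ≤ k then ((n.choose (k - p) : ZMod p)) else 0) * ((A (n + p - k) : ZMod p))
      = if p ≤ k then ((n.choose (k - p) : ZMod p)) * ((A (n - (k - p)) : ZMod p)) else 0 := by
    split_ifs with hpk
    · by_cases hk : k ≤ n + p
      · have hnp : n + p - k = n - (k - p) := by omega
        rw [hnp]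
      · rw [Nat.choose_eq_zero_of_lt (show n < k - p by omega)]
        simp
    · simp
  rw [h1, h2]
  exact add_comm _ _

lemma appell_iter (A : ℕ → ℤ) (p : ℕ) [Fact p.Prime] (t : ℤ)
    (ht : ∀ n : ℕ, A (n + p) ≡ t * A n [ZMOD p]) (n j : ℕ) :
    (appellPoly A (n + j * p)).map (Int.castRingHom (ZMod p)) =
      (X ^ p + C (t : ZMod p)) ^ j * (appellPoly A n).map (Int.castRingHom (ZMod p)) := by
  induction j with
  | zero => simp
  | succ j ih =>
      have : n + (j + 1) * p = (n + j * p) + p := by ring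
      rw [this, appell_step A p t ht, ih, pow_succ]
      ring

theorem appell_add_mul_pow_prime (A : ℕ → ℤ) (hA0 : A 0 = 1) (p : ℕ) (hp : p.Prime)
    (hodd : Odd p) (t : ℤ) (ht : ∀ n : ℕ, A (n + p) ≡ t * A n [ZMOD p])
    (n m s : ℕ) (hs : 1 ≤ s) :
    (appellPoly A (n + m * p ^ s)).map (Int.castRingHom (ZMod p)) =
      (X ^ (p ^ s) + C (t : ZMod p)) ^ m *
        (appellPoly A n).map (Int.castRingHom (ZMod p)) := by
  haveI : Fact p.Prime := ⟨hp⟩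
  obtain ⟨s', rfl⟩ : ∃ s', s = s' + 1 := ⟨s - 1, by omega⟩
  have hms : m * p ^ (s' + 1) = (m * p ^ s') * p := by ring
  rw [hms, appell_iter A p t ht n (m * p ^ s')]
  have hpow : ((X : (ZMod p)[X]) ^ p + C (t : ZMod p)) ^ (m * p ^ s')
      = (X ^ p ^ (s' + 1) + C (t : ZMod p)) ^ m := by
    rw [mul_comm m (p ^ s'), pow_mul, add_pow_char_pow (p := p), ← pow_mul, ← C_pow,
      ZMod.pow_card_pow]
    congr 2
    ring
  rw [hpow]
end

section
/- Let A : ℕ → ℤ with A_0 = 1, p an odd prime, t an integer with A_{n+p} ≡ t·A_n (mod p) for all n ≥ 0, and A_n(x) = Σ_{k=0}^{n} C(n,k)·A_{n-k}·x^k. Then for every m ≥ 0 and s ≥ 1, A_{m·p^s}(x) ≡ (x^{p^s} + t)^m modulo p in (ℤ/pℤ)[x]. -/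
open Polynomial Finset

lemma appellPoly_coeff (A : ℕ → ℤ) (n j : ℕ) :
    (appellPoly A n).coeff j = (n.choose j : ℤ) * A (n - j) := by
  simp only [appellPoly, finset_sum_coeff, coeff_smul, coeff_X_pow, smul_eq_mul,
    mul_ite, mul_one, mul_zero]
  rw [Finset.sum_ite_eq (Finset.range (n + 1)) j]
  simp only [Finset.mem_range]
  split_ifs with h
  · rfl
  · rw [Nat.choose_eq_zero_of_lt (by omega)]; simp

lemma lucas_step (p : ℕ) [Fact p.Prime] (n j : ℕ) :
    (((n + p).choose j : ZMod p)) =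
      (n.choose j : ZMod p) + (if p ≤ j then ((n.choose (j - p) : ZMod p)) else 0) := by
  have hxp : ((X : (ZMod p)[X]) + 1) ^ p = X ^ p + 1 := by
    rw [add_pow_char]; simp
  have h : ((X : (ZMod p)[X]) + 1) ^ (n + p) = (X + 1) ^ n * (X ^ p + 1) := by
    rw [pow_add, hxp]
  have h2 := congrArg (fun q : (ZMod p)[X] => q.coeff j) h
  simp only [coeff_X_add_one_pow, mul_add, mul_one, coeff_add, coeff_mul_X_pow',
    coeff_X_add_one_pow] at h2
  rw [h2, add_comm]

theorem appell_mul_pow_prime (A : ℕ → ℤ) (hA0 : A 0 = 1) (p : ℕ) (hp : p.Prime)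
    (hodd : Odd p) (t : ℤ) (ht : ∀ n : ℕ, A (n + p) ≡ t * A n [ZMOD p])
    (m s : ℕ) (hs : 1 ≤ s) :
    (appellPoly A (m * p ^ s)).map (Int.castRingHom (ZMod p)) =
      (X ^ (p ^ s) + C (t : ZMod p)) ^ m := by
  haveI : Fact p.Prime := ⟨hp⟩
  set f : ℕ → (ZMod p)[X] := fun n => (appellPoly A n).map (Int.castRingHom (ZMod p)) with hf
  have hcoeff : ∀ n j, (f n).coeff j = (n.choose j : ZMod p) * ((A (n - j) : ℤ) : ZMod p) := by
    intro n j
    rw [hf]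
    simp [coeff_map, appellPoly_coeff]
  have hA : ∀ k : ℕ, ((A (k + p) : ℤ) : ZMod p) = (t : ZMod p) * ((A k : ℤ) : ZMod p) := by
    intro k
    have := (ZMod.intCast_eq_intCast_iff _ _ _).mpr (ht k)
    push_cast at this ⊢
    exact this
  have key : ∀ n, f (n + p) = (X ^ p + C (t : ZMod p)) * f n := by
    intro n
    ext j
    rw [add_mul, coeff_add, (commute_X_pow (f n) p).eq, coeff_mul_X_pow', coeff_C_mul,
      hcoeff, lucas_step p n j]
    by_cases hpj : p ≤ j
    · simp only [if_pos hpj, hcoeff]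
      have hidx : n + p - j = n - (j - p) := by omega
      rw [hidx]
      by_cases hjn : j ≤ n
      · have hidx2 : n - (j - p) = (n - j) + p := by omega
        rw [hidx2, hA]
        ring
      · rw [Nat.choose_eq_zero_of_lt (by omega : n < j)]
        push_cast
        ring
    · simp only [if_neg hpj, hcoeff]
      by_cases hjn : j ≤ n
      · have hidx : n + p - j = (n - j) + p := by omega
        rw [hidx, hA]
        ring
      · rw [Nat.choose_eq_zero_of_lt (by omega : n < j)]
        push_cast
        ring
  have f0 : f 0 = 1 := by
    rw [hf]
    simp [appellPoly, hA0]
  have hmul : ∀ k, f (k * p) = (X ^ p + C (t : ZMod p)) ^ k := by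
    intro k
    induction k with
    | zero => simpa using f0
    | succ k ih =>
      have : (k + 1) * p = k * p + p := by ring
      rw [this, key, ih, pow_succ, mul_comm]
  have hps : m * p ^ s = (m * p ^ (s - 1)) * p := by
    rw [mul_assoc, ← pow_succ]
    congr 2
    omega
  have hfrob : (X ^ p + C (t : ZMod p)) ^ (p ^ (s - 1)) = X ^ (p ^ s) + C (t : ZMod p) := by
    rw [add_pow_char_pow, ← pow_mul, ← C_pow, ZMod.pow_card_pow]
    congr 2
    rw [← pow_succ']
    congr 1
    omega
  calc f (m * p ^ s) = (X ^ p + C (t : ZMod p)) ^ (m * p ^ (s - 1)) := by rw [hps, hmul]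
    _ = ((X ^ p + C (t : ZMod p)) ^ (p ^ (s - 1))) ^ m := by rw [← pow_mul, mul_comm]
    _ = (X ^ (p ^ s) + C (t : ZMod p)) ^ m := by rw [hfrob]
end
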